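/- arXiv:1804.02514 — 2 statements merged into one kernel-verified Lean document; each statement's English description precedes it below -/
import Mathlib

section
/- If G is a stem Lie superalgebra (i.e., Z(G) ⊆ [G,G]), then the Lie superalgebra of central derivations SDer_z(G) is abelian. -/
/-!
A central derivation `T` kills `[G,G]`: `T[x,y] = [Tx,y] ± [x,Ty]` and both brackets vanish
because `Tx` and `Ty` are central. In a stem algebra the image of `T₂` lies in `Z(G) ⊆ [G,G]`,
so `T₁ T₂ = 0`, and symmetrically `T₂ T₁ = 0`; hence their superbracket vanishes.
-/

/-- A Lie superalgebra: a `ZMod 2`-graded vector space with a bilinear bracket that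
respects the grading, is super skew-symmetric and satisfies the super Jacobi identity. -/
structure LieSuperAlg (K : Type*) [Field K] (L : Type*) [AddCommGroup L] [Module K L] where
  br : L →ₗ[K] L →ₗ[K] L
  grading : ZMod 2 → Submodule K L
  internal : DirectSum.IsInternal grading
  br_grade : ∀ (i j : ZMod 2), ∀ x ∈ grading i, ∀ y ∈ grading j, br x y ∈ grading (i + j)
  skew : ∀ (i j : ZMod 2), ∀ x ∈ grading i, ∀ y ∈ grading j,
    br x y = -(((-1 : K) ^ (i.val * j.val)) • br y x)
  jacobi : ∀ (i j : ZMod 2), ∀ x ∈ grading i, ∀ y ∈ grading j, ∀ z : L,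
    br x (br y z) = br (br x y) z + ((-1 : K) ^ (i.val * j.val)) • br y (br x z)

variable {K : Type*} [Field K] {L : Type*} {M : Type*} [AddCommGroup L] [Module K L]
  [AddCommGroup M] [Module K M]

/-- The center `Z(G)`. -/
def LieSuperAlg.center (S : LieSuperAlg K L) : Submodule K L where
  carrier := {x | ∀ g : L, S.br g x = 0}
  add_mem' := by intro a b ha hb g; rw [map_add, ha g, hb g, add_zero]
  zero_mem' := by intro g; simp
  smul_mem' := by intro c a ha g; rw [map_smul, ha g, smul_zero]

/-- The derived subalgebra `G¹ = [G,G]`. -/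
def LieSuperAlg.derived (S : LieSuperAlg K L) : Submodule K L :=
  Submodule.span K {z | ∃ x y : L, S.br x y = z}

/-- The lower central series `G⁰ = G`, `Gⁿ⁺¹ = [Gⁿ, G]`. -/
def LieSuperAlg.lcs (S : LieSuperAlg K L) : ℕ → Submodule K L
  | 0 => ⊤
  | n + 1 => Submodule.span K {z | ∃ x ∈ S.lcs n, ∃ y : L, S.br x y = z}

/-- A superderivation of degree `α`. -/
def LieSuperAlg.IsSuperDer (S : LieSuperAlg K L) (α : ZMod 2) (T : L →ₗ[K] L) : Prop :=
  (∀ (i : ZMod 2), ∀ x ∈ S.grading i, T x ∈ S.grading (i + α)) ∧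
  (∀ (i : ZMod 2), ∀ x ∈ S.grading i, ∀ y : L,
    T (S.br x y) = S.br (T x) y + ((-1 : K) ^ (α.val * i.val)) • S.br x (T y))

/-- A central derivation: a superderivation with image in the center. -/
def LieSuperAlg.IsCentralDer (S : LieSuperAlg K L) (α : ZMod 2) (T : L →ₗ[K] L) : Prop :=
  S.IsSuperDer α T ∧ ∀ x : L, T x ∈ S.center

/-- The superbracket of two (homogeneous, of degrees `α`, `β`) linear endomorphisms. -/
def sbr (α β : ZMod 2) (T₁ T₂ : L →ₗ[K] L) : L →ₗ[K] L :=
  T₁ ∘ₗ T₂ - ((-1 : K) ^ (α.val * β.val)) • (T₂ ∘ₗ T₁)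

lemma br_mem_derived (S : LieSuperAlg K L) (x y : L) : S.br x y ∈ S.derived :=
  Submodule.subset_span ⟨x, y, rfl⟩

/-- An isoclinism `(φ, θ)` between two Lie superalgebras. -/
structure Isoclinism (SG : LieSuperAlg K L) (SH : LieSuperAlg K M) where
  φ : (L ⧸ SG.center) ≃ₗ[K] (M ⧸ SH.center)
  θ : SG.derived ≃ₗ[K] SH.derived
  φ_grade : ∀ (i : ZMod 2), ∀ x ∈ SG.grading i, ∃ h ∈ SH.grading i,
    φ (Submodule.Quotient.mk x) = Submodule.Quotient.mk h
  θ_grade : ∀ (i : ZMod 2), ∀ (x : L) (hx : x ∈ SG.derived), x ∈ SG.grading i →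
    (θ ⟨x, hx⟩ : M) ∈ SH.grading i
  compat : ∀ (x y : L) (h k : M),
    φ (Submodule.Quotient.mk x) = Submodule.Quotient.mk h →
    φ (Submodule.Quotient.mk y) = Submodule.Quotient.mk k →
    (θ ⟨SG.br x y, br_mem_derived SG x y⟩ : M) = SH.br h k


namespace LieSuperAlg

variable (S : LieSuperAlg K L)

theorem linearMap_eq_zero_of_forall_mem_grading {N : Type*} [AddCommGroup N] [Module K N]
    (f : L →ₗ[K] N) (hf : ∀ i, ∀ x ∈ S.grading i, f x = 0) : f = 0 := by
  rw [← LinearMap.ker_eq_top, eq_top_iff, ← S.internal.submodule_iSup_eq_top]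
  exact iSup_le fun i x hx => hf i x hx

theorem exists_add_eq (x : L) : ∃ x₀ ∈ S.grading 0, ∃ x₁ ∈ S.grading 1, x₀ + x₁ = x := by
  have hx : x ∈ ⨆ i, S.grading i := S.internal.submodule_iSup_eq_top ▸ Submodule.mem_top
  have hsup : (⨆ i, S.grading i) = S.grading 0 ⊔ S.grading 1 :=
    le_antisymm (iSup_le fun i => by fin_cases i; exacts [le_sup_left, le_sup_right])
      (sup_le (le_iSup _ 0) (le_iSup _ 1))
  exact Submodule.mem_sup.mp (hsup ▸ hx)

theorem eq_zero_of_mem_grading_of_mem_grading_add_one {i : ZMod 2} {x : L}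
    (hx : x ∈ S.grading i) (hx' : x ∈ S.grading (i + 1)) : x = 0 :=
  Submodule.disjoint_def.mp (S.internal.submodule_iSupIndep.pairwiseDisjoint (by simp)) x hx hx'

/- `Z(G)` is defined by `[g, z] = 0`; super skew-symmetry, which turns this into `[z, g] = 0`,
applies only to homogeneous `z`. -/
theorem mem_center_of_add_mem_center {z₀ z₁ : L} (h₀ : z₀ ∈ S.grading 0)
    (h₁ : z₁ ∈ S.grading 1) (hz : z₀ + z₁ ∈ S.center) : z₀ ∈ S.center ∧ z₁ ∈ S.center := by
  suffices ∀ j, ∀ g ∈ S.grading j, S.br g z₀ = 0 ∧ S.br g z₁ = 0 by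
    refine ⟨fun g => ?_, fun g => ?_⟩
    · exact LinearMap.congr_fun (S.linearMap_eq_zero_of_forall_mem_grading (S.br.flip z₀)
        fun j g hg => (this j g hg).1) g
    · exact LinearMap.congr_fun (S.linearMap_eq_zero_of_forall_mem_grading (S.br.flip z₁)
        fun j g hg => (this j g hg).2) g
  intro j g hg
  have hsum : S.br g z₀ + S.br g z₁ = 0 := by rw [← map_add]; exact hz g
  have hz₀ : S.br g z₀ ∈ S.grading j := by simpa using S.br_grade j 0 g hg z₀ h₀
  have hz₁ : S.br g z₁ ∈ S.grading (j + 1) := S.br_grade j 1 g hg z₁ h₁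
  have hz₀' : S.br g z₀ = 0 := S.eq_zero_of_mem_grading_of_mem_grading_add_one hz₀ <| by
    rw [eq_neg_of_add_eq_zero_left hsum]; exact neg_mem hz₁
  exact ⟨hz₀', by rwa [hz₀', zero_add] at hsum⟩

theorem br_eq_zero_of_mem_center_of_mem_grading {i : ZMod 2} {z : L} (hzi : z ∈ S.grading i)
    (hz : z ∈ S.center) : S.br z = 0 :=
  S.linearMap_eq_zero_of_forall_mem_grading _ fun j g hg => by
    rw [S.skew i j z hzi g hg, hz g, smul_zero, neg_zero]

theorem br_eq_zero_of_mem_center {z : L} (hz : z ∈ S.center) : S.br z = 0 := by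
  obtain ⟨z₀, h₀, z₁, h₁, rfl⟩ := S.exists_add_eq z
  obtain ⟨hz₀, hz₁⟩ := S.mem_center_of_add_mem_center h₀ h₁ hz
  rw [map_add, S.br_eq_zero_of_mem_center_of_mem_grading h₀ hz₀,
    S.br_eq_zero_of_mem_center_of_mem_grading h₁ hz₁, add_zero]

namespace IsCentralDer

variable {S} {α : ZMod 2} {T : L →ₗ[K] L}

theorem map_br (hT : S.IsCentralDer α T) (x y : L) : T (S.br x y) = 0 := by
  refine LinearMap.congr_fun (S.linearMap_eq_zero_of_forall_mem_grading (T ∘ₗ S.br.flip y)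
    fun i x hx => ?_) x
  rw [LinearMap.comp_apply, LinearMap.flip_apply, hT.1.2 i x hx y,
    S.br_eq_zero_of_mem_center (hT.2 x), hT.2 y x, smul_zero, add_zero, LinearMap.zero_apply]

theorem derived_le_ker (hT : S.IsCentralDer α T) : S.derived ≤ LinearMap.ker T :=
  Submodule.span_le.mpr fun _ ⟨x, y, hxy⟩ => hxy ▸ hT.map_br x y

end IsCentralDer

end LieSuperAlg

/-- If `G` is a stem Lie superalgebra then `SDer_z(G)` is abelian. -/
theorem stmt0 (S : LieSuperAlg K L) (hstem : S.center ≤ S.derived) :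
    ∀ (α β : ZMod 2) (T₁ T₂ : L →ₗ[K] L), S.IsCentralDer α T₁ → S.IsCentralDer β T₂ →
      sbr α β T₁ T₂ = 0 := by
  intro α β T₁ T₂ h₁ h₂
  ext x
  have h₁₂ : T₁ (T₂ x) = 0 := h₁.derived_le_ker (hstem (h₂.2 x))
  have h₂₁ : T₂ (T₁ x) = 0 := h₂.derived_le_ker (hstem (h₁.2 x))
  simp [sbr, h₁₂, h₂₁]
end

section
/- Let H be a nilpotent Lie superalgebra of nilindex 2. Then SDer_z(H) is abelian if and only if H¹ = Z(H). -/
variable {K : Type*} [Field K] {L : Type*} {M : Type*} [AddCommGroup L] [Module K L]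
  [AddCommGroup M] [Module K M]

/-!
Nilindex 2 gives `H¹ ⊆ Z(H)`. A central derivation `T` kills `H¹`, because
`T[x, y] = [Tx, y] ± [x, Ty]` and central elements annihilate `H` from both sides; so if
`Z(H) = H¹`, both products in the superbracket of two central derivations vanish. Conversely,
take a homogeneous `z ∈ Z(H) \ H¹` of degree `γ`, a homogeneous `w ≠ 0` in `H¹`, and a functional
`f` vanishing on `H¹ + H_{γ+1}` with `f z ≠ 0`. Then `x ↦ f(x) w` and `x ↦ f(x) z` are central
derivations whose superbracket sends `z` to `f(z)² w ≠ 0`.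
-/

lemma ZMod.eq_add_one_of_ne {i k : ZMod 2} (h : k ≠ i) : k = i + 1 := by
  revert i k; decide

lemma ZMod.add_one_ne (i : ZMod 2) : i + 1 ≠ i := fun h => one_ne_zero (add_eq_left.mp h)

namespace LieSuperAlg

variable (S : LieSuperAlg K L)

lemma isCompl_grading (i : ZMod 2) : IsCompl (S.grading i) (S.grading (i + 1)) :=
  S.internal.isCompl (by revert i; decide) <| Set.ext fun k => by
    simp only [Set.mem_univ, Set.mem_insert_iff, Set.mem_singleton_iff, true_iff]
    revert i k; decide

lemma induction_on_homogeneous {motive : L → Prop} (zero : motive 0)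
    (homogeneous : ∀ i, ∀ x ∈ S.grading i, motive x)
    (add : ∀ x y, motive x → motive y → motive (x + y)) (x : L) : motive x :=
  Submodule.iSup_induction (motive := motive) _
    (S.internal.submodule_iSup_eq_top ▸ Submodule.mem_top) homogeneous zero add

lemma derived_le_of_br_mem {N : Submodule K L}
    (h : ∀ i j, ∀ x ∈ S.grading i, ∀ y ∈ S.grading j, S.br x y ∈ N) : S.derived ≤ N := by
  refine Submodule.span_le.mpr ?_
  rintro _ ⟨x, y, rfl⟩
  induction x using S.induction_on_homogeneous with
  | zero => simp
  | add x₁ x₂ h₁ h₂ => simpa using N.add_mem h₁ h₂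
  | homogeneous i x hx =>
    induction y using S.induction_on_homogeneous with
    | zero => simp
    | add y₁ y₂ h₁ h₂ => simpa using N.add_mem h₁ h₂
    | homogeneous j y hy => exact h i j x hx y hy

lemma br_eq_zero_comm {i j : ZMod 2} {x y : L} (hx : x ∈ S.grading i) (hy : y ∈ S.grading j)
    (h : S.br y x = 0) : S.br x y = 0 := by
  rw [S.skew i j x hx y hy, h, smul_zero, neg_zero]

lemma forall_br_eq_zero_comm {j : ZMod 2} {d : L} (hd : d ∈ S.grading j) :
    (∀ g, S.br g d = 0) ↔ ∀ g, S.br d g = 0 := by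
  constructor
  · intro h g
    induction g using S.induction_on_homogeneous with
    | zero => simp
    | add => simp_all
    | homogeneous i g hg => exact S.br_eq_zero_comm hd hg (h g)
  · intro h g
    induction g using S.induction_on_homogeneous with
    | zero => simp
    | add => simp_all
    | homogeneous i g hg => exact S.br_eq_zero_comm hg hd (h g)

noncomputable def proj (i : ZMod 2) : L →ₗ[K] L :=
  (S.grading i).projection (S.grading (i + 1)) (S.isCompl_grading i)

lemma proj_mem (i : ZMod 2) (x : L) : S.proj i x ∈ S.grading i :=
  Submodule.projection_apply_mem _ x

lemma proj_of_mem {i : ZMod 2} {x : L} (hx : x ∈ S.grading i) : S.proj i x = x :=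
  Submodule.projection_apply_of_mem_left _ hx

lemma proj_of_mem_of_ne {i k : ZMod 2} {x : L} (hx : x ∈ S.grading k) (hki : k ≠ i) :
    S.proj i x = 0 :=
  (Submodule.projection_apply_eq_zero_iff _).mpr (ZMod.eq_add_one_of_ne hki ▸ hx)

lemma proj_add_proj (i : ZMod 2) (x : L) : S.proj i x + S.proj (i + 1) x = x := by
  have hsub : S.proj (i + 1) (x - S.proj i x) = x - S.proj i x :=
    S.proj_of_mem (Submodule.sub_projection_mem _ x)
  have hproj : S.proj (i + 1) (S.proj i x) = 0 :=
    S.proj_of_mem_of_ne (S.proj_mem i x) (ZMod.add_one_ne i).symm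
  rw [map_sub, hproj, sub_zero] at hsub
  rw [hsub, add_sub_cancel]

lemma eq_zero_of_add_eq_zero {i : ZMod 2} {a b : L} (ha : a ∈ S.grading i)
    (hb : b ∈ S.grading (i + 1)) (hab : a + b = 0) : a = 0 :=
  (Submodule.disjoint_def.mp (S.isCompl_grading i).disjoint) a ha
    (eq_neg_of_add_eq_zero_left hab ▸ Submodule.neg_mem _ hb)

def IsHomogeneous (N : Submodule K L) : Prop := ∀ i, ∀ x ∈ N, S.proj i x ∈ N

lemma exists_proj_notMem {N : Submodule K L} {x : L} (hx : x ∉ N) : ∃ i, S.proj i x ∉ N := by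
  by_contra! h
  exact hx (S.proj_add_proj 0 x ▸ N.add_mem (h 0) (h (0 + 1)))

lemma notMem_sup_grading {N : Submodule K L} (hN : S.IsHomogeneous N) {γ : ZMod 2} {z : L}
    (hz : z ∈ S.grading γ) (hzN : z ∉ N) : z ∉ N ⊔ S.grading (γ + 1) := by
  intro hmem
  obtain ⟨n, hn, u, hu, rfl⟩ := Submodule.mem_sup.mp hmem
  apply hzN
  rw [← S.proj_of_mem hz, map_add, S.proj_of_mem_of_ne hu (ZMod.add_one_ne γ), add_zero]
  exact hN γ n hn

lemma isHomogeneous_center : S.IsHomogeneous S.center := by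
  intro i c hc g
  induction g using S.induction_on_homogeneous with
  | zero => simp
  | add => simp_all
  | homogeneous j g hg =>
    refine S.eq_zero_of_add_eq_zero (i := j + i) (b := S.br g (S.proj (i + 1) c)) ?_ ?_ ?_
    · exact S.br_grade j i g hg _ (S.proj_mem i c)
    · simpa only [add_assoc] using S.br_grade j (i + 1) g hg _ (S.proj_mem (i + 1) c)
    · rw [← map_add, S.proj_add_proj]
      exact hc g

lemma isHomogeneous_derived : S.IsHomogeneous S.derived := by
  intro i
  suffices S.derived ≤ S.derived.comap (S.proj i) from fun x hx => this hx
  refine S.derived_le_of_br_mem fun j k x hx y hy => ?_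
  by_cases hjk : j + k = i
  · rw [Submodule.mem_comap, S.proj_of_mem (hjk ▸ S.br_grade j k x hx y hy)]
    exact br_mem_derived S x y
  · rw [Submodule.mem_comap, S.proj_of_mem_of_ne (S.br_grade j k x hx y hy) hjk]
    exact S.derived.zero_mem

lemma br_eq_zero_of_mem_center_s14 {c : L} (hc : c ∈ S.center) (y : L) : S.br c y = 0 := by
  have h i := (S.forall_br_eq_zero_comm (S.proj_mem i c)).mp (S.isHomogeneous_center i c hc) y
  rw [← S.proj_add_proj 0 c, map_add, LinearMap.add_apply, h, h, add_zero]

lemma derived_le_center (h2 : S.lcs 2 = ⊥) : S.derived ≤ S.center :=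
  S.derived_le_of_br_mem fun i j x hx y hy => by
    refine (S.forall_br_eq_zero_comm (S.br_grade i j x hx y hy)).mpr fun g => ?_
    have hmem : S.br (S.br x y) g ∈ S.lcs 2 :=
      Submodule.subset_span ⟨_, Submodule.subset_span ⟨x, Submodule.mem_top, y, rfl⟩, g, rfl⟩
    simpa [h2] using hmem

lemma derived_le_ker_of_isCentralDer {α : ZMod 2} {T : L →ₗ[K] L} (hT : S.IsCentralDer α T) :
    S.derived ≤ LinearMap.ker T :=
  S.derived_le_of_br_mem fun i _ x hx y _ => by
    rw [LinearMap.mem_ker, hT.1.2 i x hx y, S.br_eq_zero_of_mem_center_s14 (hT.2 x), hT.2 y x,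
      smul_zero, add_zero]

lemma sbr_eq_zero_of_center_le_derived (hcd : S.center ≤ S.derived) {α β : ZMod 2}
    {T₁ T₂ : L →ₗ[K] L} (h₁ : S.IsCentralDer α T₁) (h₂ : S.IsCentralDer β T₂) :
    sbr α β T₁ T₂ = 0 := by
  ext x
  have h₁₂ : T₁ (T₂ x) = 0 := S.derived_le_ker_of_isCentralDer h₁ (hcd (h₂.2 x))
  have h₂₁ : T₂ (T₁ x) = 0 := S.derived_le_ker_of_isCentralDer h₂ (hcd (h₁.2 x))
  simp [sbr, h₁₂, h₂₁]

lemma isCentralDer_smulRight {f : L →ₗ[K] K} {γ μ : ZMod 2} (hfd : S.derived ≤ LinearMap.ker f)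
    (hfg : S.grading (γ + 1) ≤ LinearMap.ker f) {v : L} (hv : v ∈ S.grading μ)
    (hvc : v ∈ S.center) : S.IsCentralDer (μ + γ) (f.smulRight v) := by
  refine ⟨⟨fun i x hx => ?_, fun i x hx y => ?_⟩, fun x => S.center.smul_mem _ hvc⟩
  · by_cases hi : i = γ
    · subst hi
      rw [add_left_comm, CharTwo.add_self_eq_zero, add_zero, LinearMap.smulRight_apply]
      exact (S.grading μ).smul_mem _ hv
    · rw [LinearMap.smulRight_apply, hfg (ZMod.eq_add_one_of_ne hi ▸ hx), zero_smul]
      exact Submodule.zero_mem _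
  · simp [LinearMap.mem_ker.mp (hfd (br_mem_derived S x y)), S.br_eq_zero_of_mem_center_s14 hvc,
      hvc x]

lemma exists_sbr_ne_zero (h1 : S.derived ≠ ⊥) (hle : S.derived ≤ S.center)
    (hlt : ¬S.center ≤ S.derived) : ∃ (α β : ZMod 2) (T₁ T₂ : L →ₗ[K] L),
      S.IsCentralDer α T₁ ∧ S.IsCentralDer β T₂ ∧ sbr α β T₁ T₂ ≠ 0 := by
  obtain ⟨x, hxc, hxd⟩ := SetLike.not_le_iff_exists.mp hlt
  obtain ⟨γ, hzd⟩ := S.exists_proj_notMem hxd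
  obtain ⟨y, hyd, hy0⟩ := Submodule.exists_mem_ne_zero_of_ne_bot h1
  obtain ⟨δ, hw0⟩ := S.exists_proj_notMem (N := ⊥) (by simpa using hy0)
  rw [Submodule.mem_bot] at hw0
  set z := S.proj γ x
  set w := S.proj δ y
  have hwd : w ∈ S.derived := S.isHomogeneous_derived δ y hyd
  obtain ⟨f, hfz, hf⟩ := Submodule.exists_le_ker_of_notMem
    (S.notMem_sup_grading S.isHomogeneous_derived (S.proj_mem γ x) hzd)
  have hfd := le_sup_left.trans hf
  have hfw : f w = 0 := hfd hwd
  refine ⟨_, _, _, _,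
    S.isCentralDer_smulRight hfd (le_sup_right.trans hf) (S.proj_mem δ y) (hle hwd),
    S.isCentralDer_smulRight hfd (le_sup_right.trans hf) (S.proj_mem γ x)
      (S.isHomogeneous_center γ x hxc), fun h => ?_⟩
  have hsbr : sbr (δ + γ) (γ + γ) (f.smulRight w) (f.smulRight z) z = (f z * f z) • w := by
    simp [sbr, hfw, mul_smul]
  rw [h, LinearMap.zero_apply, eq_comm, smul_eq_zero] at hsbr
  exact hsbr.elim (hfz ∘ mul_self_eq_zero.mp) hw0

end LieSuperAlg

/-- For nilpotent `H` of nilindex 2, `SDer_z(H)` is abelian iff `H¹ = Z(H)`. -/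
theorem stmt14 (SH : LieSuperAlg K M) (h2 : SH.lcs 2 = ⊥) (h1 : SH.derived ≠ ⊥) :
    (∀ (α β : ZMod 2) (T₁ T₂ : M →ₗ[K] M), SH.IsCentralDer α T₁ → SH.IsCentralDer β T₂ →
      sbr α β T₁ T₂ = 0) ↔ SH.derived = SH.center := by
  refine ⟨fun habelian => le_antisymm (SH.derived_le_center h2) ?_,
    fun heq _ _ _ _ h₁ h₂ => SH.sbr_eq_zero_of_center_le_derived heq.ge h₁ h₂⟩
  by_contra hlt
  obtain ⟨α, β, T₁, T₂, h₁, h₂, hne⟩ := SH.exists_sbr_ne_zero h1 (SH.derived_le_center h2) hlt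
  exact hne (habelian α β T₁ T₂ h₁ h₂)
end
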